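/- Let M be a separable real Hilbert space and Σ a positive bounded self-adjoint operator on M admitting an orthonormal sequence (φ_j)_{j∈ℕ} of eigenvectors with eigenvalues λ_j > 0 such that Σh = Σ_{j∈ℕ} λ_j ⟨φ_j, h⟩ φ_j for all h ∈ M. On a probability space, let (Φ_i, ξ_i), i = 1, …, n, be i.i.d. pairs where each Φ_i : Ω → M is a square-integrable random element with E[Φ_i] = 0 and E[⟨h, Φ_i⟩⟨h′, Φ_i⟩] = ⟨h, Σ h′⟩ for all h, h′ ∈ M, each ξ_i is a real square-integrable random variable, and Φ_i is independent of ξ_i. Then for every f ∈ M and every ε > 0, E[(n⁻¹ Σ_{i=1}^{n} ξ_i ⟨(Σ + εI)⁻¹ f, Φ_i⟩)²] = n⁻¹ E[ξ₁²] Σ_{j∈ℕ} λ_j (λ_j + ε)⁻² ⟨f, φ_j⟩². -/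

import Mathlib

open MeasureTheory ProbabilityTheory RealInnerProductSpace
open scoped ENNReal

private lemma l2mul_integrable {Ω : Type*} [MeasurableSpace Ω] {P : Measure Ω}
    {f g : Ω → ℝ} (hf : MemLp f 2 P) (hg : MemLp g 2 P) :
    Integrable (fun ω => f ω * g ω) P := by
  have h := hg.smul (φ := f) hf (r := 1)
    (hpqr := ⟨by rw [ENNReal.inv_two_add_inv_two, inv_one]⟩)
  rw [memLp_one_iff_integrable] at h
  exact h

/-- Part 1 of Theorem 4 of the paper: the variance of the dominating term equals
`n⁻¹ E[ξ₁²] Σ_j λ_j (λ_j + ε)⁻² ⟨f, φ_j⟩²`, for i.i.d. pairs `(Φ_i, ξ_i)` with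
`Φ_i` centered with covariance operator `Σ` admitting the eigen-expansion
`Σh = Σ_j λ_j ⟨φ_j, h⟩ φ_j`, and `Φ_i ⟂ ξ_i`. -/
theorem stmt17
    {Ω : Type*} [MeasurableSpace Ω] (P : Measure Ω) [IsProbabilityMeasure P]
    {M : Type*} [NormedAddCommGroup M] [InnerProductSpace ℝ M] [CompleteSpace M]
    [TopologicalSpace.SeparableSpace M] [MeasurableSpace M] [BorelSpace M]
    (Sig : M →L[ℝ] M) (hSig : Sig.IsPositive)
    (φ : ℕ → M) (hφ : Orthonormal ℝ φ)
    (lam : ℕ → ℝ) (hlam : ∀ j, 0 < lam j)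
    (hexp : ∀ h : M, Sig h = ∑' j, (lam j * ⟪φ j, h⟫) • φ j)
    (n : ℕ) (hn : 0 < n)
    (Φ : Fin n → Ω → M) (ξ : Fin n → Ω → ℝ)
    (hiid : iIndepFun (fun i ω => (Φ i ω, ξ i ω)) P)
    (hident : ∀ i, IdentDistrib (fun ω => (Φ i ω, ξ i ω))
      (fun ω => (Φ ⟨0, hn⟩ ω, ξ ⟨0, hn⟩ ω)) P P)
    (hΦL2 : ∀ i, MemLp (Φ i) 2 P)
    (hΦmean : ∀ i, ∫ ω, Φ i ω ∂P = 0)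
    (hΦcov : ∀ i, ∀ h h' : M, ∫ ω, ⟪h, Φ i ω⟫ * ⟪h', Φ i ω⟫ ∂P = ⟪h, Sig h'⟫)
    (hξL2 : ∀ i, MemLp (ξ i) 2 P)
    (hindep : ∀ i, IndepFun (Φ i) (ξ i) P) :
    ∀ (f : M) (ε : ℝ), 0 < ε →
      ∫ ω, ((n : ℝ)⁻¹ * ∑ i, ξ i ω * ⟪Ring.inverse (Sig + ε • 1) f, Φ i ω⟫) ^ 2 ∂P
        = (n : ℝ)⁻¹ * (∫ ω, ξ ⟨0, hn⟩ ω ^ 2 ∂P)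
            * ∑' j, lam j * ((lam j + ε) ^ 2)⁻¹ * ⟪f, φ j⟫ ^ 2 := by
  intro f ε hε
  -- ### Invertibility of `T := Sig + ε • 1`
  set T := Sig + ε • 1 with hTdef
  have hTapp : ∀ v, T v = Sig v + ε • v := fun v => by
    simp [hTdef, ContinuousLinearMap.add_apply, ContinuousLinearMap.smul_apply,
      ContinuousLinearMap.one_apply]
  have hBapp : ∀ v w, ((innerSL ℝ).comp T : M →L[ℝ] M →L[ℝ] ℝ) v w = ⟪T v, w⟫ := fun v w => rfl
  have hcoer : IsCoercive ((innerSL ℝ).comp T : M →L[ℝ] M →L[ℝ] ℝ) := by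
    refine ⟨ε, hε, fun v => ?_⟩
    have h0 : 0 ≤ ⟪Sig v, v⟫ := by
      have := hSig.inner_nonneg_left v
      simpa using this
    have h1 : ((innerSL ℝ).comp T : M →L[ℝ] M →L[ℝ] ℝ) v v = ⟪Sig v, v⟫ + ε * ⟪v, v⟫ := by
      rw [hBapp, hTapp, inner_add_left, real_inner_smul_left]
    rw [h1, real_inner_self_eq_norm_mul_norm]
    nlinarith [norm_nonneg v]
  have hTE : ∀ v, T v = hcoer.continuousLinearEquivOfBilin v := fun v =>
    hcoer.unique_continuousLinearEquivOfBilin fun w => (hBapp v w).symm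
  have hunit : IsUnit T := ⟨hcoer.continuousLinearEquivOfBilin.toUnit, by
    ext v; exact (hTE v).symm⟩
  set g := Ring.inverse T f with hgdef
  have hTg : T g = f := by
    have h := Ring.mul_inverse_cancel T hunit
    calc T g = (T * Ring.inverse T) f := rfl
      _ = f := by rw [h]; rfl
  have hgf : Sig g + ε • g = f := by rw [← hTapp, hTg]
  -- ### eigenvector computations
  have horth := orthonormal_iff_ite.mp hφ
  have hSigφ : ∀ j, Sig (φ j) = lam j • φ j := fun j => by
    rw [hexp (φ j), tsum_eq_single j]
    · rw [horth j j]; simp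
    · intro k hk; rw [horth k j]; simp [hk]
  have hip : ∀ x y : M, (⟪Sig x, y⟫ : ℝ) = ⟪x, Sig y⟫ := fun x y => by
    have hsa := hSig.isSelfAdjoint
    rw [ContinuousLinearMap.isSelfAdjoint_iff'] at hsa
    calc (⟪Sig x, y⟫ : ℝ) = ⟪(ContinuousLinearMap.adjoint Sig) x, y⟫ := by rw [hsa]
      _ = ⟪x, Sig y⟫ := ContinuousLinearMap.adjoint_inner_left _ _ _
  have hinner_g : ∀ j, (⟪φ j, g⟫ : ℝ) = ⟪φ j, f⟫ / (lam j + ε) := fun j => by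
    have hne : lam j + ε ≠ 0 := ne_of_gt (add_pos (hlam j) hε)
    have h1 : (⟪φ j, Sig g + ε • g⟫ : ℝ) = ⟪φ j, f⟫ := by rw [hgf]
    rw [inner_add_right, real_inner_smul_right, ← hip, hSigφ, real_inner_smul_left] at h1
    field_simp
    linarith [h1]
  have hnorm_le : ∀ k, lam k ≤ ‖Sig‖ := fun k => by
    have h1 : lam k = ⟪φ k, Sig (φ k)⟫ := by
      rw [hSigφ, real_inner_smul_right, horth k k]; simp
    have h2 : (⟪φ k, Sig (φ k)⟫ : ℝ) ≤ ‖φ k‖ * ‖Sig (φ k)‖ := real_inner_le_norm _ _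
    have h3 : ‖Sig (φ k)‖ ≤ ‖Sig‖ * ‖φ k‖ := Sig.le_opNorm _
    have h4 : ‖φ k‖ = 1 := hφ.1 k
    rw [h4] at h2 h3
    simpa [h1] using h2.trans (by simpa using h3)
  have hsum2 : Summable (fun k => ‖(⟪φ k, g⟫ : ℝ)‖ ^ 2) := hφ.inner_products_summable g
  have hsummF : Summable (fun k => (lam k * ⟪φ k, g⟫) • φ k) := by
    have h := (hφ.orthogonalFamily.summable_iff_norm_sq_summable
      (fun k => (lam k * ⟪φ k, g⟫ : ℝ))).2 ?_
    · exact h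
    · refine Summable.of_nonneg_of_le (fun k => by positivity) (fun k => ?_)
        (hsum2.mul_left (‖Sig‖ ^ 2))
      have h4 : ‖(lam k * ⟪φ k, g⟫ : ℝ)‖ ^ 2 = lam k ^ 2 * ‖(⟪φ k, g⟫ : ℝ)‖ ^ 2 := by
        rw [norm_mul, mul_pow]
        congr 1
        rw [Real.norm_eq_abs, sq_abs]
      rw [h4]
      have h5 : lam k ^ 2 ≤ ‖Sig‖ ^ 2 := by
        have := hnorm_le k
        nlinarith [(hlam k).le]
      nlinarith [sq_nonneg ‖(⟪φ k, g⟫ : ℝ)‖]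
  have hgSg : (⟪g, Sig g⟫ : ℝ) = ∑' k, lam k * ⟪φ k, g⟫ ^ 2 := by
    rw [hexp g]
    calc (⟪g, ∑' j, (lam j * ⟪φ j, g⟫) • φ j⟫ : ℝ)
        = (innerSL ℝ g) (∑' j, (lam j * ⟪φ j, g⟫) • φ j) := rfl
      _ = ∑' j, (innerSL ℝ g) ((lam j * ⟪φ j, g⟫) • φ j) := (innerSL ℝ g).map_tsum hsummF
      _ = ∑' k, lam k * ⟪φ k, g⟫ ^ 2 := by
          refine tsum_congr fun k => ?_
          simp only [innerSL_apply_apply, inner_smul_right]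
          rw [real_inner_comm g (φ k)]
          ring
  have hseries : (∑' j, lam j * ((lam j + ε) ^ 2)⁻¹ * ⟪f, φ j⟫ ^ 2 : ℝ) = ⟪g, Sig g⟫ := by
    rw [hgSg]
    refine tsum_congr fun j => ?_
    have hne : lam j + ε ≠ 0 := ne_of_gt (add_pos (hlam j) hε)
    rw [hinner_g j, real_inner_comm f (φ j), div_pow]
    field_simp
  -- ### probabilistic part
  set X : Fin n → Ω → ℝ := fun i ω => ξ i ω * ⟪g, Φ i ω⟫ with hXdef
  have hinL2 : ∀ i, MemLp (fun ω => (⟪g, Φ i ω⟫ : ℝ)) 2 P := fun i => (hΦL2 i).const_inner g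
  have hXint : ∀ i, Integrable (X i) P := fun i => l2mul_integrable (hξL2 i) (hinL2 i)
  have hΦint : ∀ i, Integrable (Φ i) P := fun i => (hΦL2 i).integrable one_le_two
  have hinnerMean : ∀ i, ∫ ω, (⟪g, Φ i ω⟫ : ℝ) ∂P = 0 := fun i => by
    rw [integral_inner (hΦint i) g, hΦmean i, inner_zero_right]
  have hmeasInner : Measurable (fun x : M => (⟪g, x⟫ : ℝ)) :=
    (innerSL ℝ g).continuous.measurable
  have hindepInner : ∀ i, IndepFun (fun ω => (⟪g, Φ i ω⟫ : ℝ)) (ξ i) P := fun i =>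
    (hindep i).comp hmeasInner measurable_id
  have hXmean : ∀ i, ∫ ω, X i ω ∂P = 0 := fun i => by
    have h := (hindepInner i).symm.integral_fun_mul_eq_mul_integral
      (hξL2 i).aestronglyMeasurable (hinL2 i).aestronglyMeasurable
    calc ∫ ω, X i ω ∂P = (∫ ω, ξ i ω ∂P) * ∫ ω, (⟪g, Φ i ω⟫ : ℝ) ∂P := h
      _ = 0 := by rw [hinnerMean i, mul_zero]
  have hkmeas : Measurable (fun p : M × ℝ => p.2 * ⟪g, p.1⟫) :=
    measurable_snd.mul (hmeasInner.comp measurable_fst)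
  have hXindep : ∀ i j, i ≠ j → IndepFun (X i) (X j) P := fun i j hij =>
    (hiid.indepFun hij).comp hkmeas hkmeas
  have hsqInnerInt : ∀ i, Integrable (fun ω => (⟪g, Φ i ω⟫ : ℝ) ^ 2) P := fun i => by
    simpa [sq] using l2mul_integrable (hinL2 i) (hinL2 i)
  have hsqξInt : ∀ i, Integrable (fun ω => ξ i ω ^ 2) P := fun i => by
    simpa [sq] using l2mul_integrable (hξL2 i) (hξL2 i)
  have hindepSq : ∀ i, IndepFun (fun ω => ξ i ω ^ 2) (fun ω => (⟪g, Φ i ω⟫ : ℝ) ^ 2) P :=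
    fun i => ((hindep i).comp (hmeasInner.pow_const 2) (measurable_id.pow_const 2)).symm
  have hXXint : ∀ i j, Integrable (fun ω => X i ω * X j ω) P := by
    intro i j
    by_cases hij : i = j
    · subst hij
      have h := (hindepSq i).integrable_mul (hsqξInt i) (hsqInnerInt i)
      have heq : (fun ω => X i ω * X i ω)
          = fun ω => ξ i ω ^ 2 * (⟪g, Φ i ω⟫ : ℝ) ^ 2 := by
        funext ω; simp only [hXdef]; ring
      rw [heq]
      exact h
    · exact (hXindep i j hij).integrable_mul (hXint i) (hXint j)
  have hXdiag : ∀ i, ∫ ω, X i ω * X i ω ∂P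
      = (∫ ω, ξ ⟨0, hn⟩ ω ^ 2 ∂P) * ⟪g, Sig g⟫ := fun i => by
    have heq : (fun ω => X i ω * X i ω)
        = fun ω => ξ i ω ^ 2 * (⟪g, Φ i ω⟫ : ℝ) ^ 2 := by
      funext ω; simp only [hXdef]; ring
    have hident2 : ∫ ω, ξ i ω ^ 2 ∂P = ∫ ω, ξ ⟨0, hn⟩ ω ^ 2 ∂P :=
      ((hident i).comp (measurable_snd.pow_const 2)).integral_eq
    have hcov : ∫ ω, (⟪g, Φ i ω⟫ : ℝ) ^ 2 ∂P = ⟪g, Sig g⟫ := by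
      have := hΦcov i g g
      simpa [sq] using this
    calc ∫ ω, X i ω * X i ω ∂P
        = ∫ ω, ξ i ω ^ 2 * (⟪g, Φ i ω⟫ : ℝ) ^ 2 ∂P := by rw [heq]
      _ = (∫ ω, ξ i ω ^ 2 ∂P) * ∫ ω, (⟪g, Φ i ω⟫ : ℝ) ^ 2 ∂P :=
          (hindepSq i).integral_fun_mul_eq_mul_integral (hsqξInt i).aestronglyMeasurable
            (hsqInnerInt i).aestronglyMeasurable
      _ = (∫ ω, ξ ⟨0, hn⟩ ω ^ 2 ∂P) * ⟪g, Sig g⟫ := by rw [hident2, hcov]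
  have hoff : ∀ i j, i ≠ j → ∫ ω, X i ω * X j ω ∂P = 0 := fun i j hij => by
    rw [(hXindep i j hij).integral_fun_mul_eq_mul_integral
      (hXint i).aestronglyMeasurable (hXint j).aestronglyMeasurable, hXmean i, zero_mul]
  have key : ∫ ω, (∑ i, X i ω) ^ 2 ∂P
      = (n : ℝ) * ((∫ ω, ξ ⟨0, hn⟩ ω ^ 2 ∂P) * ⟪g, Sig g⟫) := by
    have hexpand : ∀ ω, (∑ i, X i ω) ^ 2 = ∑ i, ∑ j, X i ω * X j ω := fun ω => by
      rw [sq, Finset.sum_mul_sum]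
    calc ∫ ω, (∑ i, X i ω) ^ 2 ∂P
        = ∫ ω, ∑ i, ∑ j, X i ω * X j ω ∂P := by
          refine integral_congr_ae (Filter.Eventually.of_forall fun ω => hexpand ω)
      _ = ∑ i, ∑ j, ∫ ω, X i ω * X j ω ∂P := by
          rw [integral_finset_sum _ fun i _ =>
            integrable_finset_sum _ fun j _ => hXXint i j]
          exact Finset.sum_congr rfl fun i _ =>
            integral_finset_sum _ fun j _ => hXXint i j
      _ = ∑ i : Fin n, ((∫ ω, ξ ⟨0, hn⟩ ω ^ 2 ∂P) * ⟪g, Sig g⟫) := by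
          refine Finset.sum_congr rfl fun i _ => ?_
          rw [Finset.sum_eq_single i]
          · exact hXdiag i
          · intro j _ hji
            exact hoff i j (Ne.symm hji)
          · intro h
            exact absurd (Finset.mem_univ i) h
      _ = (n : ℝ) * ((∫ ω, ξ ⟨0, hn⟩ ω ^ 2 ∂P) * ⟪g, Sig g⟫) := by
          rw [Finset.sum_const, Finset.card_univ, Fintype.card_fin, nsmul_eq_mul]
  have hn' : (n : ℝ) ≠ 0 := Nat.cast_ne_zero.mpr hn.ne'
  calc ∫ ω, ((n : ℝ)⁻¹ * ∑ i, ξ i ω * ⟪g, Φ i ω⟫) ^ 2 ∂P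
      = ∫ ω, ((n : ℝ)⁻¹) ^ 2 * (∑ i, X i ω) ^ 2 ∂P := by
        refine integral_congr_ae (Filter.Eventually.of_forall fun ω => ?_)
        dsimp only
        rw [mul_pow]
    _ = ((n : ℝ)⁻¹) ^ 2 * ∫ ω, (∑ i, X i ω) ^ 2 ∂P := integral_const_mul _ _
    _ = ((n : ℝ)⁻¹) ^ 2 * ((n : ℝ) * ((∫ ω, ξ ⟨0, hn⟩ ω ^ 2 ∂P) * ⟪g, Sig g⟫)) := by rw [key]
    _ = (n : ℝ)⁻¹ * (∫ ω, ξ ⟨0, hn⟩ ω ^ 2 ∂P) * ⟪g, Sig g⟫ := by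
        field_simp
    _ = (n : ℝ)⁻¹ * (∫ ω, ξ ⟨0, hn⟩ ω ^ 2 ∂P)
          * ∑' j, lam j * ((lam j + ε) ^ 2)⁻¹ * ⟪f, φ j⟫ ^ 2 := by rw [hseries]
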